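/- Let b, c ∈ ℂ with |b| ≤ 1, |c| ≤ 1, set m = |4b − 2c| and n = |2c|, and assume m ≤ 2. Let ρ₁ be the smallest root in (0,1) of the equation 1 − (m+n) r − 3(6 + m n) r² − 17(m+n) r³ − 12(3 + m n) r⁴ − 15(m+n) r⁵ − (14 + m n) r⁶ + (m+n) r⁷ + 3 r⁸ = 0 (such a root exists). Then for every f ∈ K²_{b,c} and every z ∈ ℂ with 0 < |z| < ρ₁, one has Re(z·f'(z)/f(z)) > |z·f'(z)/f(z) − 1|. (That is, ρ₁ is the radius of parabolic starlikeness for the class K²_{b,c}.) -/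

import Mathlib

/-!
Write `f = z p₁ p₂ / (1 - z²)` with `p₁ = f / g` and `p₂ = g (1 - z²) / z`: both are Carathéodory
functions, with `|p₁'(0)| = m` and `|p₂'(0)| = n`, and
`z f'/f = (1 + z²)/(1 - z²) + z p₁'/p₁ + z p₂'/p₂`.
For a Carathéodory function `p`, the Schwarz–Pick lemma applied to `ω(z)/z`, where
`ω = (p - 1)/(p + 1)`, bounds `|z p'/p|` in terms of `|p'(0)|` and `r = |z|`; the Möbius term
contributes at least `(1 - 3r²)/(1 + r²)` to `Re w - |w - 1|`. The resulting lower bound for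
`Re(z f'/f) - |z f'/f - 1|` is `parabolicRadiusPoly m n r` over a positive denominator, and this
polynomial stays positive on `[0, ρ)` because it is positive at `0` and `ρ` is its smallest root.
-/

open Complex Real

open Metric Set
open scoped ComplexConjugate

noncomputable def blaschke (a w : ℂ) : ℂ := (w - a) / (1 - conj a * w)

lemma norm_one_sub_conj_mul_sq_sub_norm_sub_sq (a w : ℂ) :
    ‖1 - conj a * w‖ ^ 2 - ‖w - a‖ ^ 2 = (1 - ‖a‖ ^ 2) * (1 - ‖w‖ ^ 2) := by
  simp only [Complex.sq_norm, Complex.normSq_apply, Complex.sub_re, Complex.sub_im,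
    Complex.mul_re, Complex.mul_im, Complex.conj_re, Complex.conj_im, Complex.one_re,
    Complex.one_im]
  ring

lemma one_sub_conj_mul_ne_zero {a w : ℂ} (ha : ‖a‖ < 1) (hw : ‖w‖ ≤ 1) :
    1 - conj a * w ≠ 0 := by
  refine sub_ne_zero.2 fun h => ?_
  have : ‖conj a * w‖ < 1 := by
    rw [norm_mul, Complex.norm_conj]
    nlinarith [norm_nonneg a, norm_nonneg w]
  simp [← h] at this

lemma norm_blaschke_lt_one {a w : ℂ} (ha : ‖a‖ < 1) (hw : ‖w‖ < 1) : ‖blaschke a w‖ < 1 := by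
  have hd : 0 < ‖1 - conj a * w‖ := norm_pos_iff.2 (one_sub_conj_mul_ne_zero ha hw.le)
  rw [blaschke, norm_div, div_lt_one hd]
  refine lt_of_pow_lt_pow_left₀ 2 hd.le ?_
  have := norm_one_sub_conj_mul_sq_sub_norm_sub_sq a w
  have : 0 < (1 - ‖a‖ ^ 2) * (1 - ‖w‖ ^ 2) := by
    apply mul_pos <;> nlinarith [norm_nonneg a, norm_nonneg w]
  linarith

lemma blaschke_self (a : ℂ) : blaschke a a = 0 := by simp [blaschke]

lemma blaschke_zero (a : ℂ) : blaschke a 0 = -a := by simp [blaschke]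

lemma mapsTo_blaschke {a : ℂ} (ha : ‖a‖ < 1) :
    MapsTo (blaschke a) (ball 0 1) (ball 0 1) := fun _ hw => by
  rw [mem_ball_zero_iff] at hw ⊢
  exact norm_blaschke_lt_one ha hw

lemma hasDerivAt_blaschke {a w : ℂ} (h : 1 - conj a * w ≠ 0) :
    HasDerivAt (blaschke a) ((1 - conj a * a) / (1 - conj a * w) ^ 2) w := by
  have hden : HasDerivAt (fun w => 1 - conj a * w) (-conj a) w := by
    simpa using ((hasDerivAt_id w).const_mul (conj a)).const_sub 1
  refine (((hasDerivAt_id w).sub_const a).fun_div hden h).congr_deriv ?_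
  simp only [id]
  ring

lemma differentiableOn_blaschke {a : ℂ} (ha : ‖a‖ < 1) :
    DifferentiableOn ℂ (blaschke a) (ball 0 1) := fun _ hw =>
  (hasDerivAt_blaschke (one_sub_conj_mul_ne_zero ha
    (mem_ball_zero_iff.1 hw).le)).differentiableAt.differentiableWithinAt

lemma norm_one_sub_conj_mul_self {a : ℂ} (ha : ‖a‖ ≤ 1) :
    ‖1 - conj a * a‖ = 1 - ‖a‖ ^ 2 := by
  rw [Complex.conj_mul', ← ofReal_pow, ← ofReal_one, ← ofReal_sub, norm_real, Real.norm_eq_abs,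
    abs_of_nonneg (by nlinarith [norm_nonneg a])]

section SchwarzPick

variable {φ : ℂ → ℂ} {z : ℂ}

lemma norm_sub_le_of_mapsTo_ball (hd : DifferentiableOn ℂ φ (ball 0 1))
    (hφ : MapsTo φ (ball 0 1) (ball 0 1)) (hz : z ∈ ball (0 : ℂ) 1) :
    ‖φ z - φ 0‖ ≤ ‖z‖ * ‖1 - conj (φ 0) * φ z‖ := by
  have ha : ‖φ 0‖ < 1 := mem_ball_zero_iff.1 (hφ (mem_ball_self one_pos))
  have hschwarz : ‖blaschke (φ 0) (φ z)‖ ≤ ‖z‖ :=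
    Complex.norm_le_norm_of_mapsTo_ball
      ((differentiableOn_blaschke ha).comp hd hφ)
      (((mapsTo_blaschke ha).comp hφ).mono_right ball_subset_closedBall)
      (by simp [blaschke_self]) (mem_ball_zero_iff.1 hz)
  have hne := one_sub_conj_mul_ne_zero ha (mem_ball_zero_iff.1 (hφ hz)).le
  calc ‖φ z - φ 0‖ = ‖blaschke (φ 0) (φ z)‖ * ‖1 - conj (φ 0) * φ z‖ := by
        rw [← norm_mul, blaschke, div_mul_cancel₀ _ hne]
    _ ≤ ‖z‖ * ‖1 - conj (φ 0) * φ z‖ := by gcongr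

lemma norm_deriv_mul_le_of_mapsTo_ball (hd : DifferentiableOn ℂ φ (ball 0 1))
    (hφ : MapsTo φ (ball 0 1) (ball 0 1)) (hz : z ∈ ball (0 : ℂ) 1) :
    ‖deriv φ z‖ * (1 - ‖z‖ ^ 2) ≤ 1 - ‖φ z‖ ^ 2 := by
  have hz1 : ‖z‖ < 1 := mem_ball_zero_iff.1 hz
  have ha : ‖φ z‖ < 1 := mem_ball_zero_iff.1 (hφ hz)
  have hz1' : ‖-z‖ < 1 := by rwa [norm_neg]
  -- `η` is a self-map of the disc fixing `0`, so `‖η'(0)‖ ≤ 1` by Schwarz.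
  set η := blaschke (φ z) ∘ φ ∘ blaschke (-z)
  have hμ0 : blaschke (-z) 0 = z := by rw [blaschke_zero, neg_neg]
  have hη' : HasDerivAt η ((1 - conj (φ z) * φ z) / (1 - conj (φ z) * φ z) ^ 2 *
      (deriv φ z * ((1 - conj z * z) / 1 ^ 2))) 0 := by
    refine (hasDerivAt_blaschke (one_sub_conj_mul_ne_zero ha ha.le)).comp_of_eq 0 ?_
      (by simp [hμ0])
    refine HasDerivAt.comp_of_eq 0 ?_ ?_ hμ0.symm
    · exact (hd.differentiableAt (isOpen_ball.mem_nhds hz)).hasDerivAt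
    · simpa using hasDerivAt_blaschke (a := -z) (w := 0) (by simp)
  have hη : ‖deriv η 0‖ ≤ 1 :=
    Complex.norm_deriv_le_one_of_mapsTo_ball
      ((differentiableOn_blaschke ha).comp (hd.comp (differentiableOn_blaschke hz1')
        (mapsTo_blaschke hz1')) (hφ.comp (mapsTo_blaschke hz1')))
      (by
        simp only [η, Function.comp_apply, hμ0, blaschke_self]
        exact (((mapsTo_blaschke ha).comp hφ).comp (mapsTo_blaschke hz1')).mono_right
          ball_subset_closedBall) one_pos
  have hpos : 0 < 1 - ‖φ z‖ ^ 2 := by nlinarith [norm_nonneg (φ z)]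
  rw [hη'.deriv, norm_mul, norm_mul, norm_div, norm_div, norm_pow, norm_pow, norm_one, one_pow,
    div_one, norm_one_sub_conj_mul_self ha.le, norm_one_sub_conj_mul_self hz1.le] at hη
  rw [pow_two (1 - ‖φ z‖ ^ 2), ← div_div, div_self hpos.ne', one_div, inv_mul_le_iff₀ hpos,
    mul_one] at hη
  exact hη

lemma eqOn_const_or_mapsTo_ball (hd : DifferentiableOn ℂ φ (ball 0 1))
    (hφ : MapsTo φ (ball 0 1) (closedBall 0 1)) :
    (∃ c, EqOn φ (fun _ => c) (ball 0 1)) ∨ MapsTo φ (ball 0 1) (ball 0 1) := by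
  refine or_iff_not_imp_right.2 fun h => ?_
  simp only [MapsTo, not_forall] at h
  obtain ⟨w₀, hw₀, hw₀1⟩ := h
  have hmax : IsMaxOn (norm ∘ φ) (ball 0 1) w₀ := fun w hw => by
    have := mem_closedBall_zero_iff.1 (hφ hw)
    simp only [mem_ball_zero_iff, not_lt] at hw₀1
    simp only [mem_ofPred_eq, Function.comp_apply]
    linarith
  exact ⟨φ w₀, Complex.eqOn_of_isPreconnected_of_isMaxOn_norm
    (convex_ball _ _).isPreconnected isOpen_ball hd hw₀ hmax⟩

/-- Schwarz–Pick inequality, two-point form. -/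
lemma norm_sub_le_of_mapsTo_closedBall (hd : DifferentiableOn ℂ φ (ball 0 1))
    (hφ : MapsTo φ (ball 0 1) (closedBall 0 1)) (hz : z ∈ ball (0 : ℂ) 1) :
    ‖φ z - φ 0‖ ≤ ‖z‖ * ‖1 - conj (φ 0) * φ z‖ := by
  rcases eqOn_const_or_mapsTo_ball hd hφ with ⟨c, hc⟩ | hφ
  · rw [hc hz, hc (mem_ball_self one_pos), sub_self, norm_zero]
    positivity
  · exact norm_sub_le_of_mapsTo_ball hd hφ hz

/-- Schwarz–Pick inequality, infinitesimal form. -/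
lemma norm_deriv_mul_le_of_mapsTo_closedBall (hd : DifferentiableOn ℂ φ (ball 0 1))
    (hφ : MapsTo φ (ball 0 1) (closedBall 0 1)) (hz : z ∈ ball (0 : ℂ) 1) :
    ‖deriv φ z‖ * (1 - ‖z‖ ^ 2) ≤ 1 - ‖φ z‖ ^ 2 := by
  rcases eqOn_const_or_mapsTo_ball hd hφ with ⟨c, hc⟩ | hφ
  · have hφz := mem_closedBall_zero_iff.1 (hφ hz)
    rw [(Filter.eventuallyEq_of_mem (isOpen_ball.mem_nhds hz) hc).deriv_eq, deriv_const,
      norm_zero, zero_mul]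
    nlinarith [norm_nonneg (φ z)]
  · exact norm_deriv_mul_le_of_mapsTo_ball hd hφ hz

end SchwarzPick

lemma norm_mul_one_add_le_of_norm_sub_le {a w : ℂ} {r : ℝ} (hr0 : 0 ≤ r) (hr1 : r ≤ 1)
    (ha : ‖a‖ ≤ 1) (hw : ‖w‖ ≤ 1) (h : ‖w - a‖ ≤ r * ‖1 - conj a * w‖) :
    ‖w‖ * (1 + ‖a‖ * r) ≤ ‖a‖ + r := by
  set t := ‖w‖
  set α := ‖a‖
  set x := (w * conj a).re
  have hsq : ‖w - a‖ ^ 2 ≤ r ^ 2 * ‖1 - conj a * w‖ ^ 2 := by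
    rw [← mul_pow]; exact pow_le_pow_left₀ (norm_nonneg _) h 2
  have e1 : ‖w - a‖ ^ 2 = t ^ 2 + α ^ 2 - 2 * x := by
    simp only [t, α, x, Complex.sq_norm, Complex.normSq_apply, Complex.sub_re, Complex.sub_im,
      Complex.mul_re, Complex.conj_re, Complex.conj_im]
    ring
  have e2 : ‖1 - conj a * w‖ ^ 2 = 1 + α ^ 2 * t ^ 2 - 2 * x := by
    simp only [t, α, x, Complex.sq_norm, Complex.normSq_apply, Complex.sub_re, Complex.sub_im,
      Complex.mul_re, Complex.mul_im, Complex.conj_re, Complex.conj_im, Complex.one_re,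
      Complex.one_im]
    ring
  have hx : x ≤ α * t := by
    calc x ≤ ‖w * conj a‖ := Complex.re_le_norm _
      _ = α * t := by rw [norm_mul, Complex.norm_conj, mul_comm]
  rw [e1, e2] at hsq
  -- `hsq` says that `t` lies between the roots of a quadratic that factors as below.
  have hprod : (t * (1 + α * r) - (α + r)) * (t * (1 - α * r) + (r - α)) ≤ 0 := by
    nlinarith [mul_le_mul_of_nonneg_left hx (by nlinarith : (0 : ℝ) ≤ 1 - r ^ 2)]
  by_contra! hcon
  have hsecond : t * (1 - α * r) + (r - α) ≤ 0 := by
    by_contra! h2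
    nlinarith
  nlinarith [mul_nonneg hr0 (by nlinarith [norm_nonneg a, norm_nonneg w] : 0 ≤ 1 - α * t)]

lemma two_mul_add_mul_le_of_schwarzPick {r t d α : ℝ} (hr0 : 0 ≤ r) (hr1 : r ≤ 1) (ht1 : t ≤ 1)
    (hα0 : 0 ≤ α) (htα : t * (1 + α * r) ≤ α + r) (hd : d * (1 - r ^ 2) ≤ 1 - t ^ 2) :
    2 * r * (t + r * d) * ((1 - r ^ 2) * (1 + 2 * α * r + r ^ 2)) ≤
      r * (2 * α * (1 + r ^ 2) + 4 * r) * (1 - r ^ 2 * t ^ 2) := by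
  have h1 : 0 ≤ 2 * r * (1 - r * t) * (1 - r ^ 2) * (α + r - t * (1 + α * r)) := by
    have : 0 ≤ 1 - r * t := by nlinarith
    have : 0 ≤ 1 - r ^ 2 := by nlinarith
    have : 0 ≤ α + r - t * (1 + α * r) := by linarith
    positivity
  have h2 : 0 ≤ 2 * r ^ 2 * (1 + 2 * α * r + r ^ 2) * ((1 - t ^ 2) - d * (1 - r ^ 2)) := by
    have : 0 ≤ (1 - t ^ 2) - d * (1 - r ^ 2) := by linarith
    positivity
  linear_combination h1 + h2

noncomputable def caratheodoryBound (β r : ℝ) : ℝ :=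
  r * (β * (1 + r ^ 2) + 4 * r) / ((1 - r ^ 2) * (1 + β * r + r ^ 2))

lemma mul_dslope_zero_eq {f : ℂ → ℂ} (hf0 : f 0 = 0) (w : ℂ) : w * dslope f 0 w = f w := by
  simpa [hf0] using sub_smul_dslope f 0 w

lemma norm_two_mul_add_div_le {φ : ℂ → ℂ} (hd : DifferentiableOn ℂ φ (ball 0 1))
    (hφ : MapsTo φ (ball 0 1) (closedBall 0 1)) {z : ℂ} (hz : z ∈ ball (0 : ℂ) 1) :
    ‖2 * z * (φ z + z * deriv φ z) / (1 - (z * φ z) ^ 2)‖ ≤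
      caratheodoryBound (2 * ‖φ 0‖) ‖z‖ := by
  set r := ‖z‖
  set t := ‖φ z‖
  set d := ‖deriv φ z‖
  set α := ‖φ 0‖
  have hr0 : 0 ≤ r := norm_nonneg _
  have hr1 : r < 1 := mem_ball_zero_iff.1 hz
  have h1r : 0 < 1 - r ^ 2 := by nlinarith
  have ht1 : t ≤ 1 := mem_closedBall_zero_iff.1 (hφ hz)
  have htα : t * (1 + α * r) ≤ α + r :=
    norm_mul_one_add_le_of_norm_sub_le hr0 hr1.le
      (mem_closedBall_zero_iff.1 (hφ (mem_ball_self one_pos))) ht1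
      (norm_sub_le_of_mapsTo_closedBall hd hφ hz)
  have hdt : d * (1 - r ^ 2) ≤ 1 - t ^ 2 := norm_deriv_mul_le_of_mapsTo_closedBall hd hφ hz
  have hnum : ‖2 * z * (φ z + z * deriv φ z)‖ ≤ 2 * r * (t + r * d) := by
    rw [norm_mul, norm_mul, Complex.norm_two]
    gcongr
    exact (norm_add_le _ _).trans_eq (by rw [norm_mul])
  have hden : 1 - r ^ 2 * t ^ 2 ≤ ‖1 - (z * φ z) ^ 2‖ := by
    calc 1 - r ^ 2 * t ^ 2 = ‖(1 : ℂ)‖ - ‖(z * φ z) ^ 2‖ := by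
          rw [norm_one, norm_pow, norm_mul, mul_pow]
      _ ≤ ‖1 - (z * φ z) ^ 2‖ := norm_sub_norm_le _ _
  have hrt : 0 < 1 - r ^ 2 * t ^ 2 := by
    have : r ^ 2 * t ^ 2 ≤ r ^ 2 := mul_le_of_le_one_right (sq_nonneg r)
      (pow_le_one₀ (norm_nonneg _) ht1)
    linarith
  have hα0 : 0 ≤ α := norm_nonneg _
  rw [norm_div, caratheodoryBound, div_le_div_iff₀ (hrt.trans_le hden) (by positivity)]
  calc ‖2 * z * (φ z + z * deriv φ z)‖ * ((1 - r ^ 2) * (1 + 2 * α * r + r ^ 2))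
      ≤ 2 * r * (t + r * d) * ((1 - r ^ 2) * (1 + 2 * α * r + r ^ 2)) := by gcongr
    _ ≤ r * (2 * α * (1 + r ^ 2) + 4 * r) * (1 - r ^ 2 * t ^ 2) :=
        two_mul_add_mul_le_of_schwarzPick hr0 hr1.le ht1 hα0 htα hdt
    _ ≤ r * (2 * α * (1 + r ^ 2) + 4 * r) * ‖1 - (z * φ z) ^ 2‖ := by gcongr

lemma norm_two_mul_deriv_div_le {ω : ℂ → ℂ} (hd : DifferentiableOn ℂ ω (ball 0 1))
    (hω : MapsTo ω (ball 0 1) (ball 0 1)) (hω0 : ω 0 = 0) {z : ℂ} (hz : z ∈ ball (0 : ℂ) 1) :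
    ‖2 * z * deriv ω z / (1 - ω z ^ 2)‖ ≤ caratheodoryBound (2 * ‖deriv ω 0‖) ‖z‖ := by
  set φ := dslope ω 0
  have hdφ : DifferentiableOn ℂ φ (ball 0 1) :=
    (differentiableOn_dslope (ball_mem_nhds 0 one_pos)).2 hd
  have hφ : MapsTo φ (ball 0 1) (closedBall 0 1) := fun w hw => by
    simpa using Complex.norm_dslope_le_div_of_mapsTo_ball hd
      (by rw [hω0]; exact hω.mono_right ball_subset_closedBall) hw
  have hωφ : ω = fun w => w * φ w := funext fun w => (mul_dslope_zero_eq hω0 w).symm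
  have hderiv : deriv ω z = φ z + z * deriv φ z := by
    have := (hasDerivAt_id' z).fun_mul (hdφ.differentiableAt (isOpen_ball.mem_nhds hz)).hasDerivAt
    rw [hωφ, this.deriv, one_mul]
  rw [hderiv, show ω z = z * φ z from congrFun hωφ z, ← dslope_same ω 0]
  exact norm_two_mul_add_div_le hdφ hφ hz

lemma add_one_ne_zero_of_re_pos {w : ℂ} (hw : 0 < w.re) : w + 1 ≠ 0 := by
  have : 0 < (w + 1).re := by simp only [add_re, one_re]; linarith
  exact fun h => by simp [h] at this

lemma norm_sub_one_div_add_one_lt_one {w : ℂ} (hw : 0 < w.re) : ‖(w - 1) / (w + 1)‖ < 1 := by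
  have hpos : 0 < ‖w + 1‖ := norm_pos_iff.2 (add_one_ne_zero_of_re_pos hw)
  rw [norm_div, div_lt_one hpos]
  refine lt_of_pow_lt_pow_left₀ 2 hpos.le ?_
  have : ‖w + 1‖ ^ 2 - ‖w - 1‖ ^ 2 = 4 * w.re := by
    simp only [Complex.sq_norm, Complex.normSq_apply, Complex.add_re, Complex.add_im,
      Complex.sub_re, Complex.sub_im, Complex.one_re, Complex.one_im]
    ring
  linarith

lemma hasDerivAt_sub_one_div_add_one {p : ℂ → ℂ} {p' z : ℂ} (hp : HasDerivAt p p' z)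
    (hz : p z + 1 ≠ 0) :
    HasDerivAt (fun w => (p w - 1) / (p w + 1)) (2 * p' / (p z + 1) ^ 2) z := by
  refine ((hp.sub_const 1).fun_div (hp.add_const 1) hz).congr_deriv ?_
  ring

structure IsCaratheodory (p : ℂ → ℂ) : Prop where
  differentiableOn : DifferentiableOn ℂ p (ball 0 1)
  map_zero : p 0 = 1
  re_pos : ∀ z ∈ ball (0 : ℂ) 1, 0 < (p z).re

namespace IsCaratheodory

variable {p : ℂ → ℂ} {z : ℂ}

lemma ne_zero (hp : IsCaratheodory p) (hz : z ∈ ball (0 : ℂ) 1) : p z ≠ 0 := fun h => by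
  simpa [h] using hp.re_pos z hz

lemma add_one_ne_zero (hp : IsCaratheodory p) (hz : z ∈ ball (0 : ℂ) 1) : p z + 1 ≠ 0 :=
  add_one_ne_zero_of_re_pos (hp.re_pos z hz)

theorem norm_mul_logDeriv_le (hp : IsCaratheodory p) (hz : z ∈ ball (0 : ℂ) 1) :
    ‖z * logDeriv p z‖ ≤ caratheodoryBound ‖deriv p 0‖ ‖z‖ := by
  set ω := fun w => (p w - 1) / (p w + 1)
  have hω' : ∀ w ∈ ball (0 : ℂ) 1, HasDerivAt ω (2 * deriv p w / (p w + 1) ^ 2) w :=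
    fun w hw => hasDerivAt_sub_one_div_add_one
      (hp.differentiableOn.differentiableAt (isOpen_ball.mem_nhds hw)).hasDerivAt
      (hp.add_one_ne_zero hw)
  have hω : MapsTo ω (ball 0 1) (ball 0 1) := fun w hw =>
    mem_ball_zero_iff.2 (norm_sub_one_div_add_one_lt_one (hp.re_pos w hw))
  have hω0 : ω 0 = 0 := by simp [ω, hp.map_zero]
  have hdω : DifferentiableOn ℂ ω (ball 0 1) := fun w hw =>
    (hω' w hw).differentiableAt.differentiableWithinAt
  have h0 : (0 : ℂ) ∈ ball (0 : ℂ) 1 := mem_ball_self one_pos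
  have hβ : 2 * ‖deriv ω 0‖ = ‖deriv p 0‖ := by
    rw [(hω' 0 h0).deriv, hp.map_zero, norm_div, norm_mul, norm_pow]
    norm_num
    ring
  -- `p = (1 + ω) / (1 - ω)`, whence `z p' / p = 2 z ω' / (1 - ω²)`.
  have hlog : z * logDeriv p z = 2 * z * deriv ω z / (1 - ω z ^ 2) := by
    have h1 := hp.add_one_ne_zero hz
    have h2 := hp.ne_zero hz
    have hden : 1 - ω z ^ 2 = 4 * p z / (p z + 1) ^ 2 := by
      simp only [ω]
      field_simp
      ring
    rw [logDeriv_apply, (hω' z hz).deriv, hden]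
    field_simp
    ring
  rw [hlog, ← hβ]
  exact norm_two_mul_deriv_div_le hdω hω hω0 hz

end IsCaratheodory

lemma AnalyticAt.dslope {f : ℂ → ℂ} {a : ℂ} (hf : AnalyticAt ℂ f a) :
    AnalyticAt ℂ (dslope f a) a := by
  obtain ⟨p, hp⟩ := hf
  exact hp.has_fpower_series_dslope_fslope.analyticAt

lemma deriv_dslope_same {f : ℂ → ℂ} {a : ℂ} (hf : AnalyticAt ℂ f a) :
    deriv (dslope f a) a = iteratedDeriv 2 f a / 2 := by
  set F := dslope f a
  have hF : AnalyticAt ℂ F a := hf.dslope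
  have hfF : f = fun w => f a + (w - a) * F w :=
    funext fun w => by rw [← smul_eq_mul, sub_smul_dslope, add_sub_cancel]
  have hderiv : deriv f =ᶠ[nhds a] fun w => F w + (w - a) * deriv F w :=
    hF.eventually_analyticAt.mono fun w hw => by
      rw [hfF, (((hasDerivAt_id' w).sub_const a).fun_mul
        hw.differentiableAt.hasDerivAt).const_add (f a) |>.deriv, one_mul]
  have h2 := hF.differentiableAt.hasDerivAt.fun_add
    (((hasDerivAt_id' a).sub_const a).fun_mul hF.deriv.differentiableAt.hasDerivAt)
  rw [iteratedDeriv_succ, iteratedDeriv_one, hderiv.deriv_eq, h2.deriv, sub_self, zero_mul,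
    add_zero, one_mul]
  ring

section DecompositionK2

variable {f g : ℂ → ℂ} {z : ℂ}

lemma dslope_ne_zero_of_re_pos (hg0 : g 0 = 0) (hg1 : deriv g 0 = 1)
    (hre : ∀ z ∈ ball (0 : ℂ) 1, z ≠ 0 → 0 < (g z * (1 - z ^ 2) / z).re)
    (hz : z ∈ ball (0 : ℂ) 1) : dslope g 0 z ≠ 0 := by
  rcases eq_or_ne z 0 with rfl | hz0
  · simp [hg1]
  · intro h
    have := hre z hz hz0
    rw [← mul_dslope_zero_eq hg0, h] at this
    simp at this

lemma isCaratheodory_dslope_mul_one_sub_sq (hg : DifferentiableOn ℂ g (ball 0 1))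
    (hg0 : g 0 = 0) (hg1 : deriv g 0 = 1)
    (hre : ∀ z ∈ ball (0 : ℂ) 1, z ≠ 0 → 0 < (g z * (1 - z ^ 2) / z).re) :
    IsCaratheodory fun z => dslope g 0 z * (1 - z ^ 2) where
  differentiableOn :=
    ((differentiableOn_dslope (ball_mem_nhds 0 one_pos)).2 hg).mul (by fun_prop)
  map_zero := by simp [hg1]
  re_pos z hz := by
    rcases eq_or_ne z 0 with rfl | hz0
    · simp [hg1]
    · convert hre z hz hz0 using 2
      rw [← mul_dslope_zero_eq hg0]
      field_simp

lemma isCaratheodory_dslope_div (hf : DifferentiableOn ℂ f (ball 0 1))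
    (hg : DifferentiableOn ℂ g (ball 0 1)) (hf0 : f 0 = 0) (hf1 : deriv f 0 = 1)
    (hg0 : g 0 = 0) (hg1 : deriv g 0 = 1)
    (hre₁ : ∀ z ∈ ball (0 : ℂ) 1, z ≠ 0 → 0 < (f z / g z).re)
    (hre₂ : ∀ z ∈ ball (0 : ℂ) 1, z ≠ 0 → 0 < (g z * (1 - z ^ 2) / z).re) :
    IsCaratheodory fun z => dslope f 0 z / dslope g 0 z where
  differentiableOn :=
    ((differentiableOn_dslope (ball_mem_nhds 0 one_pos)).2 hf).div
      ((differentiableOn_dslope (ball_mem_nhds 0 one_pos)).2 hg)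
      fun _ hz => dslope_ne_zero_of_re_pos hg0 hg1 hre₂ hz
  map_zero := by simp [hf1, hg1]
  re_pos z hz := by
    rcases eq_or_ne z 0 with rfl | hz0
    · simp [hf1, hg1]
    · convert hre₁ z hz hz0 using 2
      rw [← mul_dslope_zero_eq hf0, ← mul_dslope_zero_eq hg0, mul_div_mul_left _ _ hz0]

lemma deriv_dslope_div_zero (hf : AnalyticAt ℂ f 0) (hg : AnalyticAt ℂ g 0)
    (hf1 : deriv f 0 = 1) (hg1 : deriv g 0 = 1) :
    deriv (fun z => dslope f 0 z / dslope g 0 z) 0 =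
      iteratedDeriv 2 f 0 / 2 - iteratedDeriv 2 g 0 / 2 := by
  have hG : dslope g 0 0 ≠ 0 := by simp [hg1]
  rw [(hf.dslope.differentiableAt.hasDerivAt.fun_div
    hg.dslope.differentiableAt.hasDerivAt hG).deriv, deriv_dslope_same hf,
    deriv_dslope_same hg]
  simp [hf1, hg1]

lemma deriv_dslope_mul_one_sub_sq_zero (hg : AnalyticAt ℂ g 0) :
    deriv (fun z => dslope g 0 z * (1 - z ^ 2)) 0 = iteratedDeriv 2 g 0 / 2 := by
  have h := hg.dslope.differentiableAt.hasDerivAt.fun_mul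
    ((hasDerivAt_pow 2 (0 : ℂ)).const_sub 1)
  rw [h.deriv, deriv_dslope_same hg]
  simp

lemma mul_logDeriv_eq_add (hf : DifferentiableOn ℂ f (ball 0 1))
    (hg : DifferentiableOn ℂ g (ball 0 1)) (hf0 : f 0 = 0) (hg0 : g 0 = 0)
    (hg1 : deriv g 0 = 1) (hre₁ : ∀ z ∈ ball (0 : ℂ) 1, z ≠ 0 → 0 < (f z / g z).re)
    (hre₂ : ∀ z ∈ ball (0 : ℂ) 1, z ≠ 0 → 0 < (g z * (1 - z ^ 2) / z).re)
    (hz : z ∈ ball (0 : ℂ) 1) (hz0 : z ≠ 0) :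
    z * logDeriv f z = (1 + z ^ 2) / (1 - z ^ 2) +
      z * logDeriv (fun z => dslope f 0 z / dslope g 0 z) z +
      z * logDeriv (fun z => dslope g 0 z * (1 - z ^ 2)) z := by
  have hdF := ((differentiableOn_dslope (ball_mem_nhds 0 one_pos)).2 hf).differentiableAt
    (isOpen_ball.mem_nhds hz)
  have hdG := ((differentiableOn_dslope (ball_mem_nhds 0 one_pos)).2 hg).differentiableAt
    (isOpen_ball.mem_nhds hz)
  have hG := dslope_ne_zero_of_re_pos hg0 hg1 hre₂ hz
  have hF : dslope f 0 z ≠ 0 := fun h => by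
    simpa [← mul_dslope_zero_eq hf0 z, h] using hre₁ z hz hz0
  have hz2 : 1 - z ^ 2 ≠ 0 := by
    have : ‖z ^ 2‖ < 1 := by
      rw [norm_pow]; exact pow_lt_one₀ (norm_nonneg _) (mem_ball_zero_iff.1 hz) two_ne_zero
    exact sub_ne_zero.2 fun h => by simp [← h] at this
  have hlogf : logDeriv f z = 1 / z + logDeriv (dslope f 0) z := by
    have hf' : f = fun w => w * dslope f 0 w := funext fun w => (mul_dslope_zero_eq hf0 w).symm
    conv_lhs => rw [hf']
    rw [logDeriv_mul z hz0 hF (by fun_prop) hdF, logDeriv_id']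
  have hlog : logDeriv (fun w : ℂ => 1 - w ^ 2) z = -(2 * z) / (1 - z ^ 2) := by
    simp [logDeriv_apply]
  rw [hlogf, logDeriv_div z hF hG hdF hdG,
    logDeriv_mul z hG hz2 hdG (by fun_prop), hlog]
  field_simp
  ring

end DecompositionK2

lemma re_one_add_div_one_sub_sub_norm_ge {u : ℂ} (hu : ‖u‖ ≤ 1 / 2) :
    (1 - 3 * ‖u‖) / (1 + ‖u‖) ≤ ((1 + u) / (1 - u)).re - ‖(1 + u) / (1 - u) - 1‖ := by
  set s := ‖u‖
  set d := ‖1 - u‖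
  have hu1 : 1 - u ≠ 0 := sub_ne_zero.2 fun h => by simp [s, ← h] at hu; norm_num at hu
  have hd0 : 0 < d := norm_pos_iff.2 hu1
  have hd_le : d ≤ 1 + s := (norm_sub_le _ _).trans_eq (by rw [norm_one])
  have hd_ge : 1 - s ≤ d := by simpa using norm_sub_norm_le (1 : ℂ) u
  have hre : ((1 + u) / (1 - u)).re = (1 - s ^ 2) / d ^ 2 := by
    rw [Complex.div_re, Complex.sq_norm, Complex.sq_norm]
    have : normSq (1 - u) ≠ 0 := by rwa [Ne, Complex.normSq_eq_zero]
    simp only [Complex.normSq_apply, Complex.add_re, Complex.add_im, Complex.sub_re,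
      Complex.sub_im, Complex.one_re, Complex.one_im] at this ⊢
    field_simp
    ring
  have hnorm : ‖(1 + u) / (1 - u) - 1‖ = 2 * s / d := by
    rw [div_sub_one hu1, show 1 + u - (1 - u) = 2 * u by ring, norm_div, norm_mul,
      Complex.norm_two]
  rw [hre, hnorm]
  have hs1 : 0 < 1 + s := by positivity
  have hfact : (1 - s ^ 2) / d ^ 2 - 2 * s / d - (1 - 3 * s) / (1 + s) =
      (1 + s - d) * ((1 - 3 * s) * d + (1 - s ^ 2)) / (d ^ 2 * (1 + s)) := by
    field_simp
    ring
  have hnum : 0 ≤ (1 + s - d) * ((1 - 3 * s) * d + (1 - s ^ 2)) := by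
    apply mul_nonneg (by linarith)
    rcases le_total (1 - 3 * s) 0 with hcs | hcs
    · nlinarith [mul_le_mul_of_nonpos_left hd_le hcs]
    · nlinarith [mul_nonneg hcs hd0.le]
  have : 0 ≤ (1 - s ^ 2) / d ^ 2 - 2 * s / d - (1 - 3 * s) / (1 + s) := by
    rw [hfact]; positivity
  linarith

lemma re_sub_norm_sub_one_le_add (w A B : ℂ) :
    w.re - ‖w - 1‖ - 2 * ‖A‖ - 2 * ‖B‖ ≤ (w + A + B).re - ‖w + A + B - 1‖ := by
  have hA := neg_le_of_abs_le (Complex.abs_re_le_norm A)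
  have hB := neg_le_of_abs_le (Complex.abs_re_le_norm B)
  have : ‖w + A + B - 1‖ ≤ ‖w - 1‖ + ‖A‖ + ‖B‖ := by
    rw [show w + A + B - 1 = w - 1 + A + B by ring]
    exact norm_add₃_le
  simp only [Complex.add_re]
  linarith

lemma pos_of_forall_ne_zero {q : ℝ → ℝ} {r : ℝ} (hq : ContinuousOn q (Icc 0 r)) (h0 : 0 < q 0)
    (hr : 0 ≤ r) (hne : ∀ x ∈ Ioc 0 r, q x ≠ 0) : 0 < q r := by
  by_contra! h
  obtain ⟨x, hx, hqx⟩ := intermediate_value_Icc' hr hq ⟨h, h0.le⟩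
  rcases hx.1.eq_or_lt with rfl | hx0
  · exact h0.ne' hqx
  · exact hne x ⟨hx0, hx.2⟩ hqx

def parabolicRadiusPoly (m n r : ℝ) : ℝ :=
  1 - (m + n) * r - 3 * (6 + m * n) * r ^ 2 - 17 * (m + n) * r ^ 3 - 12 * (3 + m * n) * r ^ 4
    - 15 * (m + n) * r ^ 5 - (14 + m * n) * r ^ 6 + (m + n) * r ^ 7 + 3 * r ^ 8

section ParabolicRadiusPoly

variable {m n r : ℝ}

lemma sq_le_of_parabolicRadiusPoly_pos (hm : 0 ≤ m) (hn : 0 ≤ n) (hr0 : 0 ≤ r) (hr1 : r ≤ 1)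
    (hq : 0 < parabolicRadiusPoly m n r) : r ^ 2 ≤ 1 / 2 := by
  unfold parabolicRadiusPoly at hq
  have hr6 : r ^ 6 ≤ 1 := pow_le_one₀ hr0 hr1
  have hr8 : r ^ 8 ≤ r ^ 6 := pow_le_pow_of_le_one hr0 hr1 (by norm_num)
  have hmn : 0 ≤ (m + n) * r * (1 + 17 * r ^ 2 + 15 * r ^ 4 - r ^ 6) := by
    have : 0 ≤ 1 + 17 * r ^ 2 + 15 * r ^ 4 - r ^ 6 := by nlinarith [sq_nonneg r, pow_nonneg hr0 4]
    positivity
  have hmn' : 0 ≤ m * n * (3 * r ^ 2 + 12 * r ^ 4 + r ^ 6) := by positivity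
  nlinarith [pow_nonneg hr0 4, pow_nonneg hr0 6]

lemma two_mul_caratheodoryBound_add_lt (hm : 0 ≤ m) (hn : 0 ≤ n) (hr0 : 0 ≤ r) (hr1 : r < 1)
    (hq : 0 < parabolicRadiusPoly m n r) :
    2 * caratheodoryBound m r + 2 * caratheodoryBound n r < (1 - 3 * r ^ 2) / (1 + r ^ 2) := by
  have h1 : 0 < 1 - r ^ 2 := by nlinarith
  have h2 : 0 < 1 + m * r + r ^ 2 := by positivity
  have h3 : 0 < 1 + n * r + r ^ 2 := by positivity
  have hid : (1 - 3 * r ^ 2) / (1 + r ^ 2) - 2 * caratheodoryBound m r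
      - 2 * caratheodoryBound n r = parabolicRadiusPoly m n r /
        ((1 + r ^ 2) * (1 - r ^ 2) * (1 + m * r + r ^ 2) * (1 + n * r + r ^ 2)) := by
    unfold caratheodoryBound parabolicRadiusPoly
    field_simp
    ring
  have : 0 < parabolicRadiusPoly m n r /
      ((1 + r ^ 2) * (1 - r ^ 2) * (1 + m * r + r ^ 2) * (1 + n * r + r ^ 2)) := by positivity
  linarith

end ParabolicRadiusPoly

theorem stmt_7_general (b c : ℂ)
    (m : ℝ) (hm : m = ‖4 * b - 2 * c‖)
    (n : ℝ) (hn : n = ‖2 * c‖)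
    (f : ℂ → ℂ) (hf : AnalyticOnNhd ℂ f (Metric.ball (0:ℂ) 1))
    (hf0 : f 0 = 0) (hf1 : deriv f 0 = 1)
    (hf2 : iteratedDeriv 2 f 0 / 2 = 4 * b)
    (hg : ∃ g : ℂ → ℂ, AnalyticOnNhd ℂ g (Metric.ball (0:ℂ) 1) ∧
      g 0 = 0 ∧ deriv g 0 = 1 ∧ iteratedDeriv 2 g 0 / 2 = 2 * c ∧
      ∀ z ∈ Metric.ball (0:ℂ) 1, z ≠ 0 →
        0 < (f z / g z).re ∧ 0 < (g z * (1 - z ^ 2) / z).re)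
    (ρ : ℝ) (hρ : ρ ∈ Set.Ioo (0:ℝ) 1)
    (hsmall : ∀ r ∈ Set.Ioo (0:ℝ) 1, 1 - (m + n)*r - 3*(6 + m*n)*r^2 - 17*(m + n)*r^3 - 12*(3 + m*n)*r^4 - 15*(m + n)*r^5 - (14 + m*n)*r^6 + (m + n)*r^7 + 3*r^8 = 0 → ρ ≤ r) :
    ∀ z : ℂ, 0 < ‖z‖ → ‖z‖ < ρ →
      (z * deriv f z / f z).re > ‖z * deriv f z / f z - 1‖ := by
  obtain ⟨g, hg, hg0, hg1, hg2, hre⟩ := hg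
  have hre₁ := fun z hz hz0 => (hre z hz hz0).1
  have hre₂ := fun z hz hz0 => (hre z hz hz0).2
  have h0 : (0 : ℂ) ∈ ball (0 : ℂ) 1 := mem_ball_self one_pos
  have hm' : ‖deriv (fun z => dslope f 0 z / dslope g 0 z) 0‖ = m := by
    rw [deriv_dslope_div_zero (hf 0 h0) (hg 0 h0) hf1 hg1, hf2, hg2, hm]
  have hn' : ‖deriv (fun z => dslope g 0 z * (1 - z ^ 2)) 0‖ = n := by
    rw [deriv_dslope_mul_one_sub_sq_zero (hg 0 h0), hg2, hn]
  have hm0 : 0 ≤ m := hm ▸ norm_nonneg _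
  have hn0 : 0 ≤ n := hn ▸ norm_nonneg _
  intro z hz0 hzρ
  have hz1 : ‖z‖ < 1 := hzρ.trans hρ.2
  have hz : z ∈ ball (0 : ℂ) 1 := mem_ball_zero_iff.2 hz1
  have hq : 0 < parabolicRadiusPoly m n ‖z‖ :=
    pos_of_forall_ne_zero (by unfold parabolicRadiusPoly; fun_prop)
      (by simp [parabolicRadiusPoly]) hz0.le fun x hx hqx =>
        (hsmall x ⟨hx.1, hx.2.trans_lt hz1⟩ hqx).not_gt (hx.2.trans_lt hzρ)
  rw [mul_div_assoc, ← logDeriv_apply, mul_logDeriv_eq_add hf.differentiableOn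
    hg.differentiableOn hf0 hg0 hg1 hre₁ hre₂ hz (norm_pos_iff.1 hz0), gt_iff_lt, ← sub_pos]
  refine lt_of_lt_of_le ?_ (re_sub_norm_sub_one_le_add _ _ _)
  have hw := re_one_add_div_one_sub_sub_norm_ge (u := z ^ 2)
    (by rw [norm_pow]; exact sq_le_of_parabolicRadiusPoly_pos hm0 hn0 hz0.le hz1.le hq)
  have hA := hm' ▸ (isCaratheodory_dslope_div hf.differentiableOn hg.differentiableOn hf0 hf1
    hg0 hg1 hre₁ hre₂).norm_mul_logDeriv_le hz
  have hB := hn' ▸ (isCaratheodory_dslope_mul_one_sub_sq hg.differentiableOn hg0 hg1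
    hre₂).norm_mul_logDeriv_le hz
  rw [norm_pow] at hw
  linarith [two_mul_caratheodoryBound_add_lt hm0 hn0 hz0.le hz1 hq]

theorem stmt_7 (b c : ℂ) (hb : ‖b‖ ≤ 1) (hc : ‖c‖ ≤ 1)
    (m : ℝ) (hm : m = ‖4 * b - 2 * c‖)
    (n : ℝ) (hn : n = ‖2 * c‖)
    (hm2 : m ≤ 2)
    (f : ℂ → ℂ) (hf : AnalyticOnNhd ℂ f (Metric.ball (0:ℂ) 1))
    (hf0 : f 0 = 0) (hf1 : deriv f 0 = 1)
    (hf2 : iteratedDeriv 2 f 0 / 2 = 4 * b)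
    (hg : ∃ g : ℂ → ℂ, AnalyticOnNhd ℂ g (Metric.ball (0:ℂ) 1) ∧
      g 0 = 0 ∧ deriv g 0 = 1 ∧ iteratedDeriv 2 g 0 / 2 = 2 * c ∧
      ∀ z ∈ Metric.ball (0:ℂ) 1, z ≠ 0 →
        0 < (f z / g z).re ∧ 0 < (g z * (1 - z ^ 2) / z).re)
    (ρ : ℝ) (hρ : ρ ∈ Set.Ioo (0:ℝ) 1)
    (hroot : 1 - (m + n)*ρ - 3*(6 + m*n)*ρ^2 - 17*(m + n)*ρ^3 - 12*(3 + m*n)*ρ^4 - 15*(m + n)*ρ^5 - (14 + m*n)*ρ^6 + (m + n)*ρ^7 + 3*ρ^8 = 0)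
    (hsmall : ∀ r ∈ Set.Ioo (0:ℝ) 1, 1 - (m + n)*r - 3*(6 + m*n)*r^2 - 17*(m + n)*r^3 - 12*(3 + m*n)*r^4 - 15*(m + n)*r^5 - (14 + m*n)*r^6 + (m + n)*r^7 + 3*r^8 = 0 → ρ ≤ r) :
    ∀ z : ℂ, 0 < ‖z‖ → ‖z‖ < ρ →
      (z * deriv f z / f z).re > ‖z * deriv f z / f z - 1‖ :=
  stmt_7_general b c m hm n hn f hf hf0 hf1 hf2 hg ρ hρ hsmall
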